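/- arXiv:1402.6185 — 9 statements merged into one kernel-verified Lean document; each statement's English description precedes it below -/
import Mathlib

section
/- Let f(x₁, x₂) = 7/12 + x₁⁶ + x₂⁴ + c·x₁x₂ with c ∈ ℝ. Then f(x₁, x₂) ≥ 0 for all real x₁, x₂ if and only if |c| ≤ 6^{1/6} · 4^{1/4}. -/
open Real

private lemma key (x₁ x₂ : ℝ) :
    (6 : ℝ) ^ ((1 : ℝ) / 6) * (4 : ℝ) ^ ((1 : ℝ) / 4) * |x₁| * |x₂| ≤
      7 / 12 + x₁ ^ 6 + x₂ ^ 4 := by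
  have h := Real.geom_mean_le_arith_mean3_weighted (w₁ := 7/12) (w₂ := 1/6) (w₃ := 1/4)
    (p₁ := 1) (p₂ := 6 * x₁ ^ 6) (p₃ := 4 * x₂ ^ 4)
    (by norm_num) (by norm_num) (by norm_num) (by norm_num) (by positivity) (by positivity)
    (by norm_num)
  have h1 : ((1 : ℝ)) ^ ((7:ℝ)/12) = 1 := Real.one_rpow _
  have h2 : (6 * x₁ ^ 6 : ℝ) ^ ((1:ℝ)/6) = (6 : ℝ) ^ ((1 : ℝ) / 6) * |x₁| := by
    rw [Real.mul_rpow (by norm_num) (by positivity)]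
    congr 1
    have : (x₁ : ℝ) ^ 6 = |x₁| ^ (6 : ℕ) := by
      rw [← abs_pow, abs_of_nonneg (by positivity)]
    rw [this, ← Real.rpow_natCast |x₁| 6, ← Real.rpow_mul (abs_nonneg _)]
    norm_num
  have h3 : (4 * x₂ ^ 4 : ℝ) ^ ((1:ℝ)/4) = (4 : ℝ) ^ ((1 : ℝ) / 4) * |x₂| := by
    rw [Real.mul_rpow (by norm_num) (by positivity)]
    congr 1
    have : (x₂ : ℝ) ^ 4 = |x₂| ^ (4 : ℕ) := by
      rw [← abs_pow, abs_of_nonneg (by positivity)]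
    rw [this, ← Real.rpow_natCast |x₂| 4, ← Real.rpow_mul (abs_nonneg _)]
    norm_num
  rw [h1, h2, h3, one_mul] at h
  calc (6 : ℝ) ^ ((1 : ℝ) / 6) * (4 : ℝ) ^ ((1 : ℝ) / 4) * |x₁| * |x₂|
      = (6 : ℝ) ^ ((1 : ℝ) / 6) * |x₁| * ((4 : ℝ) ^ ((1 : ℝ) / 4) * |x₂|) := by ring
    _ ≤ 7/12 * 1 + 1/6 * (6 * x₁ ^ 6) + 1/4 * (4 * x₂ ^ 4) := h
    _ = 7 / 12 + x₁ ^ 6 + x₂ ^ 4 := by ring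

theorem stmt_4 (c : ℝ) :
    (∀ x₁ x₂ : ℝ, 0 ≤ 7 / 12 + x₁ ^ 6 + x₂ ^ 4 + c * x₁ * x₂) ↔
      |c| ≤ (6 : ℝ) ^ ((1 : ℝ) / 6) * (4 : ℝ) ^ ((1 : ℝ) / 4) := by
  set Θ : ℝ := (6 : ℝ) ^ ((1 : ℝ) / 6) * (4 : ℝ) ^ ((1 : ℝ) / 4) with hΘ
  have hΘpos : 0 < Θ := by positivity
  constructor
  · intro h
    set a : ℝ := (6 : ℝ) ^ (-(1 : ℝ) / 6) with ha
    set b : ℝ := (4 : ℝ) ^ (-(1 : ℝ) / 4) with hb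
    have hapos : 0 < a := by positivity
    have hbpos : 0 < b := by positivity
    have ha6 : a ^ 6 = 1 / 6 := by
      rw [ha, ← Real.rpow_natCast _ 6, ← Real.rpow_mul (by norm_num)]
      norm_num
    have hb4 : b ^ 4 = 1 / 4 := by
      rw [hb, ← Real.rpow_natCast _ 4, ← Real.rpow_mul (by norm_num)]
      norm_num
    have hab : Θ * (a * b) = 1 := by
      rw [hΘ, ha, hb]
      rw [show ((6:ℝ)^((1:ℝ)/6) * (4:ℝ)^((1:ℝ)/4)) * ((6:ℝ)^(-(1:ℝ)/6) * (4:ℝ)^(-(1:ℝ)/4))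
          = ((6:ℝ)^((1:ℝ)/6) * (6:ℝ)^(-(1:ℝ)/6)) * ((4:ℝ)^((1:ℝ)/4) * (4:ℝ)^(-(1:ℝ)/4)) by ring,
        ← Real.rpow_add (by norm_num), ← Real.rpow_add (by norm_num)]
      norm_num
    rcases le_or_gt 0 c with hc | hc
    · have h1 := h (-a) b
      rw [abs_of_nonneg hc]
      have hpow : (-a) ^ 6 = a ^ 6 := by ring
      rw [hpow, ha6, hb4] at h1
      nlinarith [hab]
    · have h1 := h a b
      rw [abs_of_neg hc]
      rw [ha6, hb4] at h1
      nlinarith [hab]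
  · intro hc x₁ x₂
    have h1 : Θ * |x₁| * |x₂| ≤ 7 / 12 + x₁ ^ 6 + x₂ ^ 4 := key x₁ x₂
    have h2 : -(c * x₁ * x₂) ≤ |c| * |x₁| * |x₂| := by
      calc -(c * x₁ * x₂) ≤ |c * x₁ * x₂| := neg_le_abs _
        _ = |c| * |x₁| * |x₂| := by rw [abs_mul, abs_mul]
    have h3 : |c| * |x₁| * |x₂| ≤ Θ * |x₁| * |x₂| := by
      apply mul_le_mul_of_nonneg_right _ (abs_nonneg _)
      exact mul_le_mul_of_nonneg_right hc (abs_nonneg _)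
    linarith
end

section
/- Let f₀, b₁, …, b_n be positive real numbers, let λ_1, …, λ_n be positive reals with ∑_{j=1}^n λ_j < 1 and λ_0 := 1 − ∑_{j=1}^n λ_j, let α(1), …, α(n) ∈ ℝⁿ, and let β := ∑_{j=1}^n λ_j α(j). Define Θ := (f₀/λ_0)^{λ_0} · ∏_{j=1}^n (b_j/λ_j)^{λ_j}. Then for every c with |c| ≤ Θ and every w ∈ ℝⁿ, f₀ + ∑_{j=1}^n b_j · exp(⟨w, α(j)⟩) + c · exp(⟨w, β⟩) ≥ 0. -/
open Real Finset

theorem stmt_6 (n : ℕ) (f0 : ℝ) (b lam : Fin n → ℝ) (α : Fin n → Fin n → ℝ) (c : ℝ)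
    (hf0 : 0 < f0) (hb : ∀ j, 0 < b j) (hlam : ∀ j, 0 < lam j)
    (hsum : ∑ j, lam j < 1)
    (hc : |c| ≤ (f0 / (1 - ∑ j, lam j)) ^ (1 - ∑ j, lam j) *
        ∏ j, (b j / lam j) ^ lam j) :
    ∀ w : Fin n → ℝ,
      0 ≤ f0 + ∑ j, b j * Real.exp (∑ i, w i * α j i)
          + c * Real.exp (∑ i, w i * (∑ j, lam j * α j i)) := by
  intro w
  set l0 : ℝ := 1 - ∑ j, lam j with hl0def
  have hl0 : 0 < l0 := by simp [hl0def]; linarith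
  set s : Fin n → ℝ := fun j => ∑ i, w i * α j i with hs
  set E : ℝ := Real.exp (∑ i, w i * (∑ j, lam j * α j i)) with hE
  have hEpos : 0 < E := Real.exp_pos _
  set Θ : ℝ := (f0 / l0) ^ l0 * ∏ j, (b j / lam j) ^ lam j with hΘ
  -- AM-GM over Option (Fin n)
  have key : ∏ o : Option (Fin n), (Option.elim o (f0 / l0) (fun j => b j / lam j * Real.exp (s j))) ^ (Option.elim o l0 lam)
      ≤ ∑ o : Option (Fin n), (Option.elim o l0 lam) * (Option.elim o (f0 / l0) (fun j => b j / lam j * Real.exp (s j))) := by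
    apply Real.geom_mean_le_arith_mean_weighted
    · rintro (_|j) _
      · exact hl0.le
      · exact (hlam j).le
    · rw [Fintype.sum_option]; simp [hl0def]
    · rintro (_|j) _
      · exact (div_pos hf0 hl0).le
      · exact (mul_pos (div_pos (hb j) (hlam j)) (Real.exp_pos _)).le
  rw [Fintype.prod_option, Fintype.sum_option] at key
  simp only [Option.elim] at key
  have hrhs : l0 * (f0 / l0) + ∑ j, lam j * (b j / lam j * Real.exp (s j))
      = f0 + ∑ j, b j * Real.exp (s j) := by
    rw [mul_div_cancel₀ _ hl0.ne']
    congr 1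
    refine Finset.sum_congr rfl fun j _ => ?_
    rw [← mul_assoc, mul_comm (lam j) (b j / lam j), div_mul_cancel₀ _ (hlam j).ne']
  have hlhs : (f0 / l0) ^ l0 * ∏ j, (b j / lam j * Real.exp (s j)) ^ lam j = Θ * E := by
    have h1 : ∀ j : Fin n, (b j / lam j * Real.exp (s j)) ^ lam j
        = (b j / lam j) ^ lam j * Real.exp (lam j * s j) := by
      intro j
      rw [Real.mul_rpow (div_pos (hb j) (hlam j)).le (Real.exp_pos _).le,
        ← Real.exp_mul, mul_comm (s j) (lam j), mul_comm]
    rw [Finset.prod_congr rfl fun j _ => h1 j, Finset.prod_mul_distrib,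
      ← Real.exp_sum, hΘ, hE]
    have h2 : ∑ j, lam j * s j = ∑ i, w i * (∑ j, lam j * α j i) := by
      simp only [hs, Finset.mul_sum]
      rw [Finset.sum_comm]
      apply Finset.sum_congr rfl
      intro i _
      apply Finset.sum_congr rfl
      intro j _
      ring
    rw [h2]; ring
  rw [hrhs, hlhs] at key
  have hcE : -(Θ * E) ≤ c * E := by
    have h1 : -Θ ≤ c := by linarith [neg_abs_le c, neg_le_neg hc]
    nlinarith
  linarith
end

section
/- Let f₀, b₁, …, b_n, λ_1, …, λ_n, λ_0, α(1), …, α(n), β and Θ be as in the sufficiency statement for exponential-sum circuit polynomials, and assume the vectors α(1), …, α(n) are linearly independent. If c < −Θ, then there exists w ∈ ℝⁿ with f₀ + ∑_{j=1}^n b_j · exp(⟨w, α(j)⟩) + c · exp(⟨w, β⟩) < 0. -/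
/-!
Choose `w` with `⟨w, α(j)⟩ = log x_j`, where `x_j = λ_j f₀ / (λ₀ b_j)` is the critical point of the
circuit function (solvable since the `α(j)` are linearly independent). Then `e^{⟨w, β⟩} = ∏ x_j ^ λ_j`,
`f₀ + ∑ b_j x_j = f₀ / λ₀`, and the weights are tuned so that `Θ · ∏ x_j ^ λ_j = f₀ / λ₀` as well.
Hence the function takes the value `(f₀ / λ₀)(1 + c / Θ) < 0` at `w`.
-/

open Real Finset

theorem Matrix.exists_forall_dotProduct_eq_of_linearIndependent {K ι : Type*} [Field K]
    [Fintype ι] [DecidableEq ι] {α : ι → ι → K} (hα : LinearIndependent K α) (t : ι → K) :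
    ∃ w : ι → K, ∀ j, w ⬝ᵥ α j = t j := by
  have hunit : IsUnit (Matrix.of α) := Matrix.linearIndependent_rows_iff_isUnit.1 hα
  obtain ⟨w, hw⟩ := Matrix.mulVec_surjective_iff_isUnit.2 hunit t
  exact ⟨w, fun j => by rw [← hw, dotProduct_comm]; rfl⟩

theorem sum_mul_sum_mul_eq_sum_mul_dotProduct {ι κ : Type*} [Fintype ι] [Fintype κ]
    (w : ι → ℝ) (lam : κ → ℝ) (α : κ → ι → ℝ) :
    ∑ i, w i * ∑ j, lam j * α j i = ∑ j, lam j * (w ⬝ᵥ α j) := by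
  simp only [dotProduct, mul_sum]
  rw [sum_comm]
  exact sum_congr rfl fun _ _ => sum_congr rfl fun _ _ => by ring

theorem Real.exp_sum_mul_log {ι : Type*} (s : Finset ι) (lam x : ι → ℝ)
    (hx : ∀ j ∈ s, 0 < x j) :
    exp (∑ j ∈ s, lam j * log (x j)) = ∏ j ∈ s, x j ^ lam j := by
  rw [exp_sum]
  exact prod_congr rfl fun j hj => by rw [rpow_def_of_pos (hx j hj), mul_comm]

section Circuit

variable {ι : Type*} [Fintype ι]

/-- The circuit number `Θ`, with `λ₀ = 1 - ∑ λ_j`. -/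
noncomputable def circuitNumber (f0 : ℝ) (b lam : ι → ℝ) : ℝ :=
  (f0 / (1 - ∑ j, lam j)) ^ (1 - ∑ j, lam j) * ∏ j, (b j / lam j) ^ lam j

/-- The point `x_j = e^{⟨w, α(j)⟩}` at which `b_j x_j = (λ_j / λ₀) f₀`. -/
noncomputable def circuitCriticalPoint (f0 : ℝ) (b lam : ι → ℝ) (j : ι) : ℝ :=
  lam j * f0 / ((1 - ∑ j, lam j) * b j)

variable {f0 : ℝ} {b lam : ι → ℝ}

theorem circuitCriticalPoint_pos (hf0 : 0 < f0) (hb : ∀ j, 0 < b j) (hlam : ∀ j, 0 < lam j)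
    (hsum : ∑ j, lam j < 1) (j : ι) : 0 < circuitCriticalPoint f0 b lam j :=
  div_pos (mul_pos (hlam j) hf0) (mul_pos (sub_pos.2 hsum) (hb j))

theorem add_sum_mul_circuitCriticalPoint (hb : ∀ j, b j ≠ 0) (hsum : ∑ j, lam j ≠ 1) :
    f0 + ∑ j, b j * circuitCriticalPoint f0 b lam j = f0 / (1 - ∑ j, lam j) := by
  have hL0 : 1 - ∑ j, lam j ≠ 0 := sub_ne_zero.2 hsum.symm
  have hterm : ∀ j, b j * circuitCriticalPoint f0 b lam j = lam j * (f0 / (1 - ∑ j, lam j)) :=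
    fun j => by unfold circuitCriticalPoint; field_simp [hb j]
  simp only [hterm, ← sum_mul]
  field_simp
  ring

theorem circuitNumber_mul_prod_rpow_circuitCriticalPoint (hf0 : 0 < f0) (hb : ∀ j, 0 < b j)
    (hlam : ∀ j, 0 < lam j) (hsum : ∑ j, lam j < 1) :
    circuitNumber f0 b lam * ∏ j, circuitCriticalPoint f0 b lam j ^ lam j
      = f0 / (1 - ∑ j, lam j) := by
  have hL0 : 0 < 1 - ∑ j, lam j := sub_pos.2 hsum
  have hF : 0 < f0 / (1 - ∑ j, lam j) := div_pos hf0 hL0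
  have hfactor : ∀ j ∈ univ, (b j / lam j) ^ lam j * circuitCriticalPoint f0 b lam j ^ lam j
      = (f0 / (1 - ∑ j, lam j)) ^ lam j := fun j _ => by
    rw [← mul_rpow (div_pos (hb j) (hlam j)).le
      (circuitCriticalPoint_pos hf0 hb hlam hsum j).le]
    unfold circuitCriticalPoint
    congr 1
    field_simp [(hb j).ne', (hlam j).ne']
  rw [circuitNumber, mul_assoc, ← prod_mul_distrib, prod_congr rfl hfactor,
    ← rpow_sum_of_pos hF, ← rpow_add hF, sub_add_cancel, rpow_one]

end Circuit

theorem stmt_7 (n : ℕ) (f0 : ℝ) (b lam : Fin n → ℝ) (α : Fin n → Fin n → ℝ) (c : ℝ)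
    (hf0 : 0 < f0) (hb : ∀ j, 0 < b j) (hlam : ∀ j, 0 < lam j)
    (hsum : ∑ j, lam j < 1)
    (hind : LinearIndependent ℝ α)
    (hc : c < -((f0 / (1 - ∑ j, lam j)) ^ (1 - ∑ j, lam j) *
        ∏ j, (b j / lam j) ^ lam j)) :
    ∃ w : Fin n → ℝ,
      f0 + ∑ j, b j * Real.exp (∑ i, w i * α j i)
          + c * Real.exp (∑ i, w i * (∑ j, lam j * α j i)) < 0 := by
  set x := circuitCriticalPoint f0 b lam
  have hx : ∀ j, 0 < x j := circuitCriticalPoint_pos hf0 hb hlam hsum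
  obtain ⟨w, hw⟩ :=
    Matrix.exists_forall_dotProduct_eq_of_linearIndependent hind fun j => log (x j)
  have hexp_α : ∀ j, exp (w ⬝ᵥ α j) = x j := fun j => by rw [hw j, exp_log (hx j)]
  have hexp_β : exp (∑ i, w i * ∑ j, lam j * α j i) = ∏ j, x j ^ lam j := by
    rw [sum_mul_sum_mul_eq_sum_mul_dotProduct]
    simp only [hw]
    exact exp_sum_mul_log _ lam x fun j _ => hx j
  refine ⟨w, ?_⟩
  have hprod_pos : 0 < ∏ j, x j ^ lam j := prod_pos fun j _ => rpow_pos_of_pos (hx j) _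
  have hcP := mul_lt_mul_of_pos_right hc hprod_pos
  rw [neg_mul, ← circuitNumber, circuitNumber_mul_prod_rpow_circuitCriticalPoint hf0 hb hlam hsum]
    at hcP
  change f0 + ∑ j, b j * exp (w ⬝ᵥ α j) + _ < 0
  rw [hexp_β]
  simp only [hexp_α]
  rw [add_sum_mul_circuitCriticalPoint (fun j => (hb j).ne') hsum.ne]
  linarith
end

section
/- Let f(x₁, x₂) = 1/4 + x₁⁸ + x₁²x₂⁶ + 4·x₁³x₂³. Then f(x₁, x₂) ≥ −15/4 for all real x₁, x₂. -/
theorem stmt_9 :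
    ∀ x₁ x₂ : ℝ, -(15 / 4) ≤ 1 / 4 + x₁ ^ 8 + x₁ ^ 2 * x₂ ^ 6 + 4 * x₁ ^ 3 * x₂ ^ 3 := by
  intro x₁ x₂
  nlinarith [sq_nonneg (x₁ * x₂ ^ 3 + 2 * x₁ ^ 2), sq_nonneg (x₁ ^ 4 - 2)]
end

section
/- Let f(x₁, x₂) = 187/208 + x₁^{80} + x₂^{78} − 8·x₁⁵x₂³. Then for all real x₁, x₂, f(x₁, x₂) ≥ (187/208)·(1 − (8^{208}/(16^{13}·26^{8}))^{1/187}). -/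
open Real

set_option maxRecDepth 8000

theorem stmt_10 :
    ∀ x₁ x₂ : ℝ,
      (187 / 208 : ℝ) *
          (1 - ((8 : ℝ) ^ (208 : ℕ) / ((16 : ℝ) ^ (13 : ℕ) * (26 : ℝ) ^ (8 : ℕ)))
            ^ ((1 : ℝ) / 187))
        ≤ 187 / 208 + x₁ ^ 80 + x₂ ^ 78 - 8 * x₁ ^ 5 * x₂ ^ 3 := by
  intro x₁ x₂
  set D : ℝ := (8 : ℝ) ^ (208 : ℕ) / ((16 : ℝ) ^ (13 : ℕ) * (26 : ℝ) ^ (8 : ℕ)) with hDdef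
  have hDpos : 0 < D := by positivity
  set D1 : ℝ := D ^ ((1 : ℝ) / 187) with hD1def
  have hD1pos : 0 < D1 := Real.rpow_pos_of_pos hDpos _
  -- AM-GM
  have amgm := Real.geom_mean_le_arith_mean3_weighted
    (w₁ := 1/16) (w₂ := 1/26) (w₃ := 187/208)
    (p₁ := 16 * x₁ ^ 80) (p₂ := 26 * x₂ ^ 78) (p₃ := D1)
    (by norm_num) (by norm_num) (by norm_num)
    (by positivity) (by positivity) hD1pos.le (by norm_num)
  -- compute the geometric mean
  have h1 : (16 * x₁ ^ 80 : ℝ) ^ ((1:ℝ)/16) = (16:ℝ) ^ ((1:ℝ)/16) * |x₁| ^ 5 := by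
    rw [Real.mul_rpow (by norm_num) (by positivity)]
    congr 1
    have : x₁ ^ 80 = |x₁| ^ (80 : ℕ) := by
      rw [← abs_pow, abs_of_nonneg (by positivity)]
    rw [this, ← Real.rpow_natCast |x₁| 80, ← Real.rpow_mul (abs_nonneg _),
      show ((80:ℕ):ℝ)*(1/16) = ((5:ℕ):ℝ) by norm_num, Real.rpow_natCast]
  have h2 : (26 * x₂ ^ 78 : ℝ) ^ ((1:ℝ)/26) = (26:ℝ) ^ ((1:ℝ)/26) * |x₂| ^ 3 := by
    rw [Real.mul_rpow (by norm_num) (by positivity)]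
    congr 1
    have : x₂ ^ 78 = |x₂| ^ (78 : ℕ) := by
      rw [← abs_pow, abs_of_nonneg (by positivity)]
    rw [this, ← Real.rpow_natCast |x₂| 78, ← Real.rpow_mul (abs_nonneg _),
      show ((78:ℕ):ℝ)*(1/26) = ((3:ℕ):ℝ) by norm_num, Real.rpow_natCast]
  have h3 : D1 ^ ((187:ℝ)/208) = D ^ ((1:ℝ)/208) := by
    rw [hD1def, ← Real.rpow_mul hDpos.le]
    norm_num
  have hconst : (16:ℝ) ^ ((1:ℝ)/16) * (26:ℝ) ^ ((1:ℝ)/26) * D ^ ((1:ℝ)/208) = 8 := by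
    rw [hDdef, Real.div_rpow (by positivity) (by positivity),
      Real.mul_rpow (by positivity) (by positivity),
      ← Real.rpow_natCast (8:ℝ) 208, ← Real.rpow_mul (by norm_num),
      ← Real.rpow_natCast (16:ℝ) 13, ← Real.rpow_mul (by norm_num),
      ← Real.rpow_natCast (26:ℝ) 8, ← Real.rpow_mul (by norm_num)]
    norm_num
    have h16 : ((16:ℝ) ^ ((1:ℝ)/16)) ≠ 0 := by positivity
    have h26 : ((26:ℝ) ^ ((1:ℝ)/26)) ≠ 0 := by positivity
    field_simp
  have hgm : (16 * x₁ ^ 80 : ℝ) ^ ((1:ℝ)/16) * (26 * x₂ ^ 78 : ℝ) ^ ((1:ℝ)/26)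
      * D1 ^ ((187:ℝ)/208) = 8 * |x₁| ^ 5 * |x₂| ^ 3 := by
    rw [h1, h2, h3, ← hconst]; ring
  rw [hgm] at amgm
  have habs : 8 * x₁ ^ 5 * x₂ ^ 3 ≤ 8 * |x₁| ^ 5 * |x₂| ^ 3 := by
    have : x₁ ^ 5 * x₂ ^ 3 ≤ |x₁| ^ 5 * |x₂| ^ 3 := by
      calc x₁ ^ 5 * x₂ ^ 3 ≤ |x₁ ^ 5 * x₂ ^ 3| := le_abs_self _
        _ = |x₁| ^ 5 * |x₂| ^ 3 := by rw [abs_mul, abs_pow, abs_pow]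
    linarith
  have hrhs : (1/16 : ℝ) * (16 * x₁ ^ 80) + (1/26) * (26 * x₂ ^ 78) + (187/208) * D1
      = x₁ ^ 80 + x₂ ^ 78 + (187/208) * D1 := by ring
  rw [hrhs] at amgm
  have : 8 * x₁ ^ 5 * x₂ ^ 3 ≤ x₁ ^ 80 + x₂ ^ 78 + (187/208) * D1 := le_trans habs amgm
  linarith
end

section
/- Let f(x) = f₀ + ∑_{j=1}^n f_{α(j)} x^{α(j)} + c·x^β be a polynomial with f₀ > 0, f_{α(j)} > 0, even exponents α(j) ∈ (2ℕ)ⁿ, c ∈ ℝ, and β ∈ ℕⁿ such that at least one coordinate of β is odd or c < 0 (i.e., c·x^β is not a monomial square). Then f(x) ≥ 0 for all x ∈ ℝⁿ if and only if f₀ + ∑_{j=1}^n f_{α(j)} y^{α(j)} − |c|·y^β ≥ 0 for all y ∈ ℝⁿ with all coordinates positive. -/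
open Finset

theorem stmt_13 (n : ℕ) (f0 : ℝ) (fα : Fin n → ℝ) (α : Fin n → Fin n → ℕ)
    (β : Fin n → ℕ) (c : ℝ)
    (hf0 : 0 < f0) (hfα : ∀ j, 0 < fα j)
    (heven : ∀ j i, Even (α j i))
    (hnotsq : (∃ i, Odd (β i)) ∨ c < 0) :
    (∀ x : Fin n → ℝ,
        0 ≤ f0 + ∑ j, fα j * ∏ i, x i ^ α j i + c * ∏ i, x i ^ β i) ↔
      (∀ y : Fin n → ℝ, (∀ i, 0 < y i) →
        0 ≤ f0 + ∑ j, fα j * ∏ i, y i ^ α j i - |c| * ∏ i, y i ^ β i) := by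
  constructor
  · intro h y hy
    rcases lt_or_ge c 0 with hc | hc
    · have := h y
      rw [abs_of_neg hc]
      linarith
    · rcases hnotsq with ⟨i0, hodd⟩ | hc'
      · have hmain := h (fun i => if i = i0 then -y i else y i)
        rw [abs_of_nonneg hc]
        have hα : ∀ j, ∏ i, (if i = i0 then -y i else y i) ^ α j i
            = ∏ i, y i ^ α j i := by
          intro j
          refine Finset.prod_congr rfl fun i _ => ?_
          split_ifs with h'
          · subst h'; exact (heven j i).neg_pow _
          · rfl
        have hβ : ∏ i, (if i = i0 then -y i else y i) ^ β i
            = -∏ i, y i ^ β i := by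
          have h1 := (Finset.mul_prod_erase Finset.univ
            (fun i => (if i = i0 then -y i else y i) ^ β i) (Finset.mem_univ i0)).symm
          have h2 := (Finset.mul_prod_erase Finset.univ
            (fun i => y i ^ β i) (Finset.mem_univ i0)).symm
          have h3 : ∏ i ∈ Finset.univ.erase i0, (if i = i0 then -y i else y i) ^ β i
              = ∏ i ∈ Finset.univ.erase i0, y i ^ β i :=
            Finset.prod_congr rfl fun i hi => by
              rw [if_neg (Finset.ne_of_mem_erase hi)]
          rw [h1, h2, h3, if_pos rfl, hodd.neg_pow, neg_mul]
        have hs : ∑ j, fα j * ∏ i, (if i = i0 then -y i else y i) ^ α j i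
            = ∑ j, fα j * ∏ i, y i ^ α j i :=
          Finset.sum_congr rfl fun j _ => by rw [hα j]
        rw [hs, hβ] at hmain
        linarith
      · linarith
  · intro h x
    set g : ℝ → ℝ := fun ε =>
      f0 + ∑ j, fα j * ∏ i, (|x i| + ε) ^ α j i - |c| * ∏ i, (|x i| + ε) ^ β i
      with hg_def
    have hg : ∀ ε ∈ Set.Ioi (0:ℝ), 0 ≤ g ε := by
      intro ε hε
      exact h _ (fun i => add_pos_of_nonneg_of_pos (abs_nonneg _) hε)
    have hcont : Continuous g := by
      apply Continuous.sub
      · apply Continuous.add continuous_const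
        apply continuous_finset_sum
        intro j _
        apply Continuous.mul continuous_const
        apply continuous_finset_prod
        intro i _
        exact (continuous_const.add continuous_id).pow _
      · apply Continuous.mul continuous_const
        apply continuous_finset_prod
        intro i _
        exact (continuous_const.add continuous_id).pow _
    have h0 : 0 ≤ g 0 := by
      have htend : Filter.Tendsto g (nhdsWithin 0 (Set.Ioi 0)) (nhds (g 0)) :=
        (hcont.tendsto 0).mono_left nhdsWithin_le_nhds
      exact ge_of_tendsto htend
        (Filter.eventually_of_mem self_mem_nhdsWithin hg)
    simp only [hg_def, add_zero] at h0
    have e1 : ∑ j, fα j * ∏ i, x i ^ α j i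
        = ∑ j, fα j * ∏ i, |x i| ^ α j i :=
      Finset.sum_congr rfl fun j _ => by
        congr 1
        exact Finset.prod_congr rfl fun i _ => ((heven j i).pow_abs _).symm
    have e2 : -(|c| * ∏ i, |x i| ^ β i) ≤ c * ∏ i, x i ^ β i := by
      have habs : |c * ∏ i, x i ^ β i| = |c| * ∏ i, |x i| ^ β i := by
        rw [abs_mul, Finset.abs_prod]
        congr 1
        exact Finset.prod_congr rfl fun i _ => abs_pow _ _
      have := neg_abs_le (c * ∏ i, x i ^ β i)
      linarith
    linarith
end

section
/- Let f(x₁, x₂) = λ_0 + b₁·x₁^{2a} + b₂·x₂^{2b} + c·x₁^{β₁}x₂^{β₂} with λ_0, b₁, b₂ > 0, a, b ≥ 1 integers, and (β₁, β₂) ∈ ℕ² in the interior of the triangle conv{(0,0),(2a,0),(0,2b)} with β₁ or β₂ odd. Let λ_1 = β₁/(2a), λ_2 = β₂/(2b), so that λ_0' := 1 − λ_1 − λ_2 > 0 is the barycentric coordinate of (β₁,β₂) at the origin, and assume λ_0 = λ_0'. If |c| ≤ (b₁/λ_1)^{λ_1}·(b₂/λ_2)^{λ_2}, then f(x₁, x₂)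 ≥ 0 for all real x₁, x₂. -/
lemma aux_pow_rpow (x : ℝ) (hx : 0 ≤ x) (n m : ℕ) (hn : 0 < n) :
    ((x ^ n : ℝ)) ^ ((m : ℝ) / (n : ℝ)) = x ^ m := by
  have hn' : (n : ℝ) ≠ 0 := Nat.cast_ne_zero.mpr hn.ne'
  rw [← Real.rpow_natCast x n, ← Real.rpow_mul hx,
    show (n : ℝ) * ((m : ℝ) / n) = (m : ℝ) by field_simp,
    Real.rpow_natCast]

theorem stmt_15 (lam0 b1 b2 c : ℝ) (a b : ℕ) (β1 β2 : ℕ)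
    (hlam0 : 0 < lam0) (hb1 : 0 < b1) (hb2 : 0 < b2)
    (ha : 1 ≤ a) (hb : 1 ≤ b)
    (hβ1 : 0 < β1) (hβ2 : 0 < β2)
    (hodd : Odd β1 ∨ Odd β2)
    (hinterior : (β1 : ℝ) / (2 * a) + (β2 : ℝ) / (2 * b) < 1)
    (hlam0eq : lam0 = 1 - (β1 : ℝ) / (2 * a) - (β2 : ℝ) / (2 * b))
    (hc : |c| ≤ (b1 / ((β1 : ℝ) / (2 * a))) ^ ((β1 : ℝ) / (2 * a)) *
        (b2 / ((β2 : ℝ) / (2 * b))) ^ ((β2 : ℝ) / (2 * b))) :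
    ∀ x₁ x₂ : ℝ,
      0 ≤ lam0 + b1 * x₁ ^ (2 * a) + b2 * x₂ ^ (2 * b) + c * x₁ ^ β1 * x₂ ^ β2 := by
  intro x₁ x₂
  have ha' : (0:ℝ) < a := by exact_mod_cast ha
  have hb' : (0:ℝ) < b := by exact_mod_cast hb
  set l1 : ℝ := (β1 : ℝ) / (2 * a) with hl1def
  set l2 : ℝ := (β2 : ℝ) / (2 * b) with hl2def
  have hl1 : 0 < l1 := by positivity
  have hl2 : 0 < l2 := by positivity
  -- even powers as powers of abs
  have hx1 : x₁ ^ (2 * a) = |x₁| ^ (2 * a) := by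
    rw [pow_abs, abs_of_nonneg (even_two_mul a |>.pow_nonneg x₁)]
  have hx2 : x₂ ^ (2 * b) = |x₂| ^ (2 * b) := by
    rw [pow_abs, abs_of_nonneg (even_two_mul b |>.pow_nonneg x₂)]
  set p2 : ℝ := b1 * x₁ ^ (2 * a) / l1 with hp2
  set p3 : ℝ := b2 * x₂ ^ (2 * b) / l2 with hp3
  have hp2n : 0 ≤ p2 := by
    rw [hp2, hx1]; positivity
  have hp3n : 0 ≤ p3 := by
    rw [hp3, hx2]; positivity
  have hsum : lam0 + l1 + l2 = 1 := by rw [hlam0eq]; ring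
  have key := Real.geom_mean_le_arith_mean3_weighted hlam0.le hl1.le hl2.le
    zero_le_one hp2n hp3n hsum (p₁ := 1)
  have harith : lam0 * 1 + l1 * p2 + l2 * p3
      = lam0 + b1 * x₁ ^ (2 * a) + b2 * x₂ ^ (2 * b) := by
    rw [hp2, hp3]; field_simp
  have hgeom : (1:ℝ) ^ lam0 * p2 ^ l1 * p3 ^ l2
      = (b1 / l1) ^ l1 * (b2 / l2) ^ l2 * (|x₁| ^ β1 * |x₂| ^ β2) := by
    rw [Real.one_rpow, one_mul, hp2, hp3, hx1, hx2,
      show b1 * |x₁| ^ (2 * a) / l1 = (b1 / l1) * |x₁| ^ (2 * a) by ring,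
      show b2 * |x₂| ^ (2 * b) / l2 = (b2 / l2) * |x₂| ^ (2 * b) by ring,
      Real.mul_rpow (by positivity) (by positivity),
      Real.mul_rpow (by positivity) (by positivity)]
    rw [show (|x₁| ^ (2 * a)) ^ l1 = |x₁| ^ β1 by
        rw [hl1def, show ((2:ℝ) * a) = ((2 * a : ℕ) : ℝ) by push_cast; ring]
        exact aux_pow_rpow _ (abs_nonneg _) _ _ (by omega),
      show (|x₂| ^ (2 * b)) ^ l2 = |x₂| ^ β2 by
        rw [hl2def, show ((2:ℝ) * b) = ((2 * b : ℕ) : ℝ) by push_cast; ring]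
        exact aux_pow_rpow _ (abs_nonneg _) _ _ (by omega)]
    ring
  rw [harith, hgeom] at key
  have hm : 0 ≤ |x₁| ^ β1 * |x₂| ^ β2 := by positivity
  have habs : |c * x₁ ^ β1 * x₂ ^ β2| = |c| * (|x₁| ^ β1 * |x₂| ^ β2) := by
    rw [abs_mul, abs_mul, abs_pow, abs_pow, mul_assoc]
  have h1 : |c * x₁ ^ β1 * x₂ ^ β2|
      ≤ (b1 / l1) ^ l1 * (b2 / l2) ^ l2 * (|x₁| ^ β1 * |x₂| ^ β2) := by
    rw [habs]; exact mul_le_mul_of_nonneg_right hc hm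
  have h2 := neg_abs_le (c * x₁ ^ β1 * x₂ ^ β2)
  linarith
end

section
/- Let f(x₁, x₂) = λ_0 + λ_1·x₁^{2a} + λ_2·x₂^{2b} − x₁^{β₁}x₂^{β₂}, where (β₁, β₂) = λ_1·(2a, 0) + λ_2·(0, 2b), λ_0 + λ_1 + λ_2 = 1, λ_j > 0, and β₁, β₂ are both even positive integers. Then f is a sum of squares of polynomials in ℝ[x₁, x₂]. -/
open MvPolynomial Finset

namespace Stmt17

abbrev P2 : Type := MvPolynomial (Fin 2) ℝ

def Sos (p : P2) : Prop := ∃ (s : ℕ) (g : Fin s → P2), p = ∑ i, g i ^ 2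

lemma sos_zero : Sos 0 := ⟨0, ![], by simp⟩

lemma sos_sq (g : P2) : Sos (g ^ 2) := ⟨1, fun _ => g, by simp⟩

lemma Sos.add {p q : P2} (hp : Sos p) (hq : Sos q) : Sos (p + q) := by
  obtain ⟨s, g, rfl⟩ := hp
  obtain ⟨t, h, rfl⟩ := hq
  refine ⟨s + t, Fin.addCases g h, ?_⟩
  rw [Fin.sum_univ_add]
  simp

lemma Sos.smul {p : P2} (c : ℝ) (hc : 0 ≤ c) (hp : Sos p) : Sos (C c * p) := by
  obtain ⟨s, g, rfl⟩ := hp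
  refine ⟨s, fun i => C (Real.sqrt c) * g i, ?_⟩
  rw [Finset.mul_sum]
  refine Finset.sum_congr rfl fun i _ => ?_
  rw [mul_pow, ← C_pow, Real.sq_sqrt hc]

lemma sos_sum {ι : Type*} (s : Finset ι) (f : ι → P2) (h : ∀ i ∈ s, Sos (f i)) :
    Sos (∑ i ∈ s, f i) := by
  classical
  induction s using Finset.induction_on with
  | empty => simpa using sos_zero
  | @insert x s hx ih =>
    rw [Finset.sum_insert hx]
    exact (h _ (mem_insert_self _ _)).add (ih fun i hi => h i (mem_insert_of_mem hi))

lemma sos_selfref {p q : P2} {c : ℝ} (hc1 : c < 1)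
    (h : p = C c * p + q) (hq : Sos q) : Sos p := by
  have hne : (1:ℝ) - c ≠ 0 := by linarith
  have h2 : C (1-c) * p = q := by
    rw [map_sub, sub_mul, map_one, one_mul]
    linear_combination h
  have h3 : p = C (1/(1-c)) * q := by
    rw [← h2, ← mul_assoc, ← C_mul, one_div, inv_mul_cancel₀ hne, C_1, one_mul]
  rw [h3]
  have hpos : (0:ℝ) < 1 - c := by linarith
  exact hq.smul _ (by positivity)

lemma sos_of_two_mul {p q : P2} (h : (2:P2) * p = q) (hq : Sos q) : Sos p := by
  have h3 : p = C (1/2 : ℝ) * q := by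
    rw [← h]
    rw [show ((2:P2)) = C (2:ℝ) from (map_ofNat C 2).symm, ← mul_assoc, ← C_mul]
    norm_num
  rw [h3]
  exact hq.smul _ (by norm_num)

lemma geo (t : P2) : ∀ {r' r : ℕ}, r' ≤ r →
    (t - 1) * ∑ i ∈ Finset.Ico r' r, t ^ i = t ^ r - t ^ r' := by
  intro r' r h
  induction r, h using Nat.le_induction with
  | base => simp
  | succ r h ih => rw [Finset.sum_Ico_succ_top (by omega), mul_add, ih]; ring

lemma L1_key (s : P2) {j K : ℕ} (h : j ≤ K) :
    (C ((K : ℝ) - j) + C (j : ℝ) * s ^ (2*K) - C (K : ℝ) * s ^ (2*j) : P2)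
      = ∑ r ∈ Finset.Ico j K, ∑ r' ∈ Finset.range j, ∑ i ∈ Finset.Ico r' r,
          ((s^2 - 1) * s ^ i) ^ 2 := by
  set t : P2 := s^2 with ht
  have hpow : ∀ i : ℕ, s ^ (2*i) = t ^ i := fun i => by rw [ht, ← pow_mul]
  have hterm : ∀ i : ℕ, ((s^2 - 1) * s ^ i) ^ 2 = (t-1) * ((t-1) * t ^ i) := fun i => by
    rw [mul_pow, ← pow_mul, mul_comm i 2, hpow]; ring
  have step1 : ∀ r' r : ℕ, r' ≤ r →
      ∑ i ∈ Finset.Ico r' r, ((s^2 - 1) * s ^ i) ^ 2 = (t-1) * (t ^ r - t ^ r') := by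
    intro r' r hrr
    calc ∑ i ∈ Finset.Ico r' r, ((s^2 - 1) * s ^ i) ^ 2
        = ∑ i ∈ Finset.Ico r' r, (t-1) * ((t-1) * t ^ i) :=
          Finset.sum_congr rfl fun i _ => hterm i
      _ = (t-1) * ((t-1) * ∑ i ∈ Finset.Ico r' r, t ^ i) := by
          rw [← Finset.mul_sum, ← Finset.mul_sum]
      _ = (t-1) * (t ^ r - t ^ r') := by rw [geo t hrr]
  have step2 : ∀ r ∈ Finset.Ico j K,
      ∑ r' ∈ Finset.range j, ∑ i ∈ Finset.Ico r' r, ((s^2 - 1) * s ^ i) ^ 2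
        = C (j:ℝ) * ((t-1) * t ^ r) - (t-1) * ∑ r' ∈ Finset.range j, t ^ r' := by
    intro r hr
    rw [Finset.mem_Ico] at hr
    have h1 : ∀ r' ∈ Finset.range j, ∑ i ∈ Finset.Ico r' r, ((s^2 - 1) * s ^ i) ^ 2
        = (t-1) * t ^ r - (t-1) * t ^ r' := by
      intro r' hr'
      rw [Finset.mem_range] at hr'
      rw [step1 r' r (by omega)]; ring
    rw [Finset.sum_congr rfl h1, Finset.sum_sub_distrib, Finset.sum_const,
      Finset.card_range, ← Finset.mul_sum, nsmul_eq_mul]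
    rw [show ((j:ℕ) : P2) = C (j:ℝ) from (map_natCast C j).symm]
  rw [Finset.sum_congr rfl step2, Finset.sum_sub_distrib, Finset.sum_const,
    Nat.card_Ico, ← Finset.mul_sum, nsmul_eq_mul,
    show (((K - j :ℕ)) : P2) = C ((K:ℝ) - (j:ℝ)) by
      rw [← Nat.cast_sub h]; exact (map_natCast C _).symm]
  rw [← Finset.mul_sum, geo t h,
    Finset.range_eq_Ico, geo t (Nat.zero_le j), pow_zero, hpow, hpow, map_sub]
  ring

lemma sos_L1 (s : P2) {j K : ℕ} (h : j ≤ K) :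
    Sos (C ((K : ℝ) - j) + C (j : ℝ) * s ^ (2*K) - C (K : ℝ) * s ^ (2*j)) := by
  rw [L1_key s h]
  exact sos_sum _ _ fun r _ => sos_sum _ _ fun r' _ => sos_sum _ _ fun i _ => sos_sq _

noncomputable def G (a b m n : ℕ) : P2 :=
  (C (a:ℝ) * C (b:ℝ) - C (b:ℝ) * C (m:ℝ) - C (a:ℝ) * C (n:ℝ))
  + C (b:ℝ) * C (m:ℝ) * X 0 ^ (2*a) + C (a:ℝ) * C (n:ℝ) * X 1 ^ (2*b)
  - C (a:ℝ) * C (b:ℝ) * (X 0 ^ (2*m) * X 1 ^ (2*n))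

def T (a b : ℕ) (p : ℕ × ℕ) : ℕ × ℕ :=
  if a < 2*p.1 then (2*p.1 - a, 2*p.2) else (2*p.1, 2*p.2 - b)

def Valid (a b : ℕ) (p : ℕ × ℕ) : Prop := b*p.1 + a*p.2 ≤ a*b

def Base (a b : ℕ) (p : ℕ × ℕ) : Prop :=
  p.1 = 0 ∨ p.2 = 0 ∨ (2*p.1 ≤ a ∧ 2*p.2 ≤ b)

instance (a b : ℕ) : DecidablePred (Base a b) := fun p => by
  unfold Base; infer_instance

lemma keyB (A B M N D u v w z : P2) (h : 2*M = A + D) :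
    2*((A*B - B*M - A*N) + B*M*u^2 + A*N*z - A*B*(u*(v*w)))
      = A*B*(u - v*w)^2
        + ((A*B - B*D - A*(2*N)) + B*D*u^2 + A*(2*N)*z - A*B*(v^2*w^2)) := by
  linear_combination (B*u^2 - B) * h

lemma keyC (A B M N E u v w z : P2) (h : 2*N = B + E) :
    2*((A*B - B*M - A*N) + B*M*z + A*N*u^2 - A*B*(w*(u*v)))
      = A*B*(u - w*v)^2
        + ((A*B - B*(2*M) - A*E) + B*(2*M)*z + A*E*u^2 - A*B*(w^2*v^2)) := by
  linear_combination (A*u^2 - A) * h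

-- legs
lemma sos_leg_x {a b : ℕ} {m : ℕ} (hm : m ≤ a) : Sos (G a b m 0) := by
  have h1 : G a b m 0 = C (b:ℝ) *
      (C ((a:ℝ) - (m:ℝ)) + C (m:ℝ) * (X 0:P2)^(2*a) - C (a:ℝ) * (X 0:P2)^(2*m)) := by
    unfold G
    push_cast [map_sub, map_zero]
    ring
  rw [h1]
  exact (sos_L1 (X 0) hm).smul _ (by positivity)

lemma sos_leg_y {a b : ℕ} {n : ℕ} (hn : n ≤ b) : Sos (G a b 0 n) := by
  have h1 : G a b 0 n = C (a:ℝ) *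
      (C ((b:ℝ) - (n:ℝ)) + C (n:ℝ) * (X 1:P2)^(2*b) - C (b:ℝ) * (X 1:P2)^(2*n)) := by
    unfold G
    push_cast [map_sub, map_zero]
    ring
  rw [h1]
  exact (sos_L1 (X 1) hn).smul _ (by positivity)

lemma sos_base {a b : ℕ} (ha : 0 < a) (hb : 0 < b) (p : ℕ × ℕ)
    (hv : Valid a b p) (hbase : Base a b p) : Sos (G a b p.1 p.2) := by
  obtain ⟨m, n⟩ := p
  unfold Valid at hv
  simp only at hv ⊢
  rcases hbase with h0 | h0 | ⟨h1, h2⟩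
  · simp only at h0; subst h0
    have hn : n ≤ b := by
      have : a*n ≤ a*b := by simpa using hv
      exact Nat.le_of_mul_le_mul_left this ha
    exact sos_leg_y hn
  · simp only at h0; subst h0
    have hm : m ≤ a := by
      have : b*m ≤ b*a := by rw [mul_comm b a]; simpa using hv
      exact Nat.le_of_mul_le_mul_left this hb
    exact sos_leg_x hm
  · simp only at h1 h2
    -- mediation with the two legs
    have hkey : (2:P2) * G a b m n
        = C (a:ℝ) * C (b:ℝ) * ((X 0:P2)^(2*m) - (X 1:P2)^(2*n))^2
          + (G a b (2*m) 0 + G a b 0 (2*n)) := by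
      unfold G
      push_cast [map_mul, map_ofNat, map_zero]
      ring
    refine sos_of_two_mul hkey (Sos.add ?_ ((sos_leg_x h1).add (sos_leg_y h2)))
    rw [← C_mul]
    exact (sos_sq _).smul _ (by positivity)

lemma step {a b : ℕ} (p : ℕ × ℕ) (hv : Valid a b p) (hnb : ¬ Base a b p) :
    Valid a b (T a b p) ∧
    ∃ q : P2, (2:P2) * G a b p.1 p.2
        = C (a:ℝ) * C (b:ℝ) * q^2 + G a b (T a b p).1 (T a b p).2 := by
  obtain ⟨m, n⟩ := p
  unfold Base at hnb
  push_neg at hnb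
  simp only at hnb
  unfold Valid at hv
  simp only at hv
  by_cases hcase : a < 2*m
  · -- case B : mediate with vertex (a, 0)
    have hT : T a b (m, n) = (2*m - a, 2*n) := by unfold T; simp [hcase]
    set d := 2*m - a with hdd
    have hd : 2*m = a + d := by omega
    constructor
    · rw [hT]
      unfold Valid
      simp only
      have h2 : 2*(b*m) = a*b + b*d := by
        rw [show 2*(b*m) = b*(2*m) by ring, hd]; ring
      have h4 : a*(2*n) = 2*(a*n) := by ring
      linarith [hv, h2, h4]
    · rw [hT]
      refine ⟨(X 0:P2)^a - (X 0:P2)^d * (X 1:P2)^(2*n), ?_⟩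
      have hM : (2 * C ((m:ℕ):ℝ) : P2) = C ((a:ℕ):ℝ) + C ((d:ℕ):ℝ) := by
        have : ((2*m:ℕ):ℝ) = ((a + d : ℕ):ℝ) := by rw [hd]
        push_cast at this
        rw [← map_add, ← this, map_mul, map_ofNat]
      have hGm : G a b m n = (C (a:ℝ) * C (b:ℝ) - C (b:ℝ) * C (m:ℝ) - C (a:ℝ) * C (n:ℝ))
          + C (b:ℝ) * C (m:ℝ) * ((X 0:P2)^a)^2 + C (a:ℝ) * C (n:ℝ) * (X 1:P2)^(2*b)
          - C (a:ℝ) * C (b:ℝ) * ((X 0:P2)^a * ((X 0:P2)^d * (X 1:P2)^(2*n))) := by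
        unfold G
        rw [hd, pow_add]
        ring
      have hGd : G a b d (2*n)
          = (C (a:ℝ) * C (b:ℝ) - C (b:ℝ) * C (d:ℝ) - C (a:ℝ) * (2*C (n:ℝ)))
            + C (b:ℝ) * C (d:ℝ) * ((X 0:P2)^a)^2 + C (a:ℝ) * (2*C (n:ℝ)) * (X 1:P2)^(2*b)
            - C (a:ℝ) * C (b:ℝ) * (((X 0:P2)^d)^2 * ((X 1:P2)^(2*n))^2) := by
        unfold G
        push_cast [map_mul, map_ofNat]
        ring
      rw [hGm, hGd]
      linear_combination keyB (C (a:ℝ)) (C (b:ℝ)) (C (m:ℝ)) (C (n:ℝ)) (C (d:ℝ))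
        ((X 0:P2)^a) ((X 0:P2)^d) ((X 1:P2)^(2*n)) ((X 1:P2)^(2*b)) hM
  · -- case C : mediate with vertex (0, b)
    have hbn : b < 2*n := hnb.2.2 (by omega)
    have hT : T a b (m, n) = (2*m, 2*n - b) := by unfold T; simp [hcase]
    set e := 2*n - b with hee
    have he : 2*n = b + e := by omega
    constructor
    · rw [hT]
      unfold Valid
      simp only
      have h2 : 2*(a*n) = a*b + a*e := by
        rw [show 2*(a*n) = a*(2*n) by ring, he]; ring
      have h4 : b*(2*m) = 2*(b*m) := by ring
      linarith [hv, h2, h4]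
    · rw [hT]
      refine ⟨(X 1:P2)^b - (X 0:P2)^(2*m) * (X 1:P2)^e, ?_⟩
      have hN : (2 * C ((n:ℕ):ℝ) : P2) = C ((b:ℕ):ℝ) + C ((e:ℕ):ℝ) := by
        have : ((2*n:ℕ):ℝ) = ((b + e : ℕ):ℝ) := by rw [he]
        push_cast at this
        rw [← map_add, ← this, map_mul, map_ofNat]
      have hGm : G a b m n = (C (a:ℝ) * C (b:ℝ) - C (b:ℝ) * C (m:ℝ) - C (a:ℝ) * C (n:ℝ))
          + C (b:ℝ) * C (m:ℝ) * (X 0:P2)^(2*a) + C (a:ℝ) * C (n:ℝ) * ((X 1:P2)^b)^2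
          - C (a:ℝ) * C (b:ℝ) * ((X 0:P2)^(2*m) * ((X 1:P2)^b * (X 1:P2)^e)) := by
        unfold G
        rw [he, pow_add]
        ring
      have hGe : G a b (2*m) e
          = (C (a:ℝ) * C (b:ℝ) - C (b:ℝ) * (2*C (m:ℝ)) - C (a:ℝ) * C (e:ℝ))
            + C (b:ℝ) * (2*C (m:ℝ)) * (X 0:P2)^(2*a) + C (a:ℝ) * C (e:ℝ) * ((X 1:P2)^b)^2
            - C (a:ℝ) * C (b:ℝ) * (((X 0:P2)^(2*m))^2 * ((X 1:P2)^e)^2) := by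
        unfold G
        push_cast [map_mul, map_ofNat]
        ring
      rw [hGm, hGe]
      linear_combination keyC (C (a:ℝ)) (C (b:ℝ)) (C (m:ℝ)) (C (n:ℝ)) (C (e:ℝ))
        ((X 1:P2)^b) ((X 1:P2)^e) ((X 0:P2)^(2*m)) ((X 0:P2)^(2*a)) hN

lemma unfold_orbit {a b : ℕ} :
    ∀ (k : ℕ) (p : ℕ × ℕ), Valid a b p →
      (∀ i < k, ¬ Base a b ((T a b)^[i] p)) →
      Valid a b ((T a b)^[k] p) ∧
      ∃ q : P2, Sos q ∧
        G a b p.1 p.2 = q + C (((2:ℝ)⁻¹) ^ k) * G a b ((T a b)^[k] p).1 ((T a b)^[k] p).2 := by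
  intro k
  induction k with
  | zero =>
    intro p hv _
    refine ⟨hv, 0, sos_zero, ?_⟩
    simp
  | succ k ih =>
    intro p hv hnb
    have hnb0 : ¬ Base a b p := by simpa using hnb 0 (Nat.succ_pos k)
    obtain ⟨hvT, q, hq⟩ := step p hv hnb0
    obtain ⟨hvk, q', hq', heq⟩ := ih (T a b p) hvT (fun i hi => by
      have := hnb (i+1) (by omega)
      rwa [Function.iterate_succ_apply] at this)
    rw [Function.iterate_succ_apply]
    refine ⟨hvk, C ((2:ℝ)⁻¹) * (C (a:ℝ) * C (b:ℝ) * q^2) + C ((2:ℝ)⁻¹) * q', ?_, ?_⟩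
    · refine Sos.add ?_ (hq'.smul _ (by norm_num))
      refine Sos.smul _ (by norm_num) ?_
      rw [← C_mul]
      exact (sos_sq q).smul _ (by positivity)
    · have h2 : G a b p.1 p.2 = C ((2:ℝ)⁻¹) * ((2:P2) * G a b p.1 p.2) := by
        rw [show ((2:P2)) = C (2:ℝ) from (map_ofNat C 2).symm, ← mul_assoc, ← C_mul]
        norm_num
      rw [h2, hq, heq]
      rw [mul_add, add_assoc]
      congr 1
      rw [mul_add]
      congr 1
      rw [← mul_assoc, ← C_mul, pow_succ]
      ring_nf

lemma sos_cycle {a b : ℕ} (ha : 0 < a) (hb : 0 < b) (p : ℕ × ℕ) (hv : Valid a b p)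
    (hnb : ∀ k ≤ (a+1)*(b+1), ¬ Base a b ((T a b)^[k] p))
    (hvalid : ∀ k ≤ (a+1)*(b+1), Valid a b ((T a b)^[k] p))
    (x y : ℕ) (hlt : x < y) (hy : y ≤ (a+1)*(b+1))
    (hfeq : (T a b)^[x] p = (T a b)^[y] p) :
    Sos (G a b p.1 p.2) := by
  set N := (a+1)*(b+1)
  -- unfold from p to x
  obtain ⟨hvx, q1, hq1, heq1⟩ := unfold_orbit x p hv (fun i hi => hnb i (by omega))
  -- unfold from s_x for (y - x) steps
  have hshift : ∀ i, (T a b)^[i] ((T a b)^[x] p) = (T a b)^[i + x] p := by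
    intro i
    rw [← Function.iterate_add_apply]
  obtain ⟨_, q2, hq2, heq2⟩ := unfold_orbit (y - x) ((T a b)^[x] p) hvx (fun i hi => by
    rw [hshift]
    exact hnb (i + x) (by omega))
  rw [hshift, show y - x + x = y by omega, ← hfeq] at heq2
  -- self-reference
  have hsx : Sos (G a b ((T a b)^[x] p).1 ((T a b)^[x] p).2) := by
    refine sos_selfref (c := ((2:ℝ)⁻¹) ^ (y - x)) ?_ ?_ hq2
    · apply pow_lt_one₀ (by norm_num) (by norm_num)
      omega
    · linear_combination heq2
  rw [heq1]
  exact hq1.add (hsx.smul _ (by positivity))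

lemma sos_main {a b : ℕ} (ha : 0 < a) (hb : 0 < b) (p : ℕ × ℕ) (hv : Valid a b p) :
    Sos (G a b p.1 p.2) := by
  classical
  set N := (a+1)*(b+1) with hN
  by_cases hex : ∃ k, k ≤ N ∧ Base a b ((T a b)^[k] p)
  · -- hits a base point; take the least such index
    have hdp : DecidablePred fun k => k ≤ N ∧ Base a b ((T a b)^[k] p) := fun k => by
      infer_instance
    obtain ⟨hk₀N, hk₀b⟩ := Nat.find_spec hex
    set k₀ := Nat.find hex with hk₀
    have hmin : ∀ i < k₀, ¬ Base a b ((T a b)^[i] p) := by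
      intro i hi hbase
      exact Nat.find_min hex hi ⟨by omega, hbase⟩
    obtain ⟨hvk, q, hq, heq⟩ := unfold_orbit k₀ p hv hmin
    rw [heq]
    exact hq.add ((sos_base ha hb _ hvk hk₀b).smul _ (by positivity))
  · -- no base point within N steps: pigeonhole gives a cycle
    push_neg at hex
    have hnb : ∀ k ≤ N, ¬ Base a b ((T a b)^[k] p) := hex
    -- all iterates valid
    have hvalid : ∀ k ≤ N, Valid a b ((T a b)^[k] p) := by
      intro k hk
      exact (unfold_orbit k p hv (fun i hi => hnb i (by omega))).1
    -- pigeonhole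
    have hmaps : ∀ k ∈ Finset.range (N+1),
        (T a b)^[k] p ∈ (Finset.range (a+1)) ×ˢ (Finset.range (b+1)) := by
      intro k hk
      rw [Finset.mem_range] at hk
      have hvk := hvalid k (by omega)
      unfold Valid at hvk
      rw [Finset.mem_product, Finset.mem_range, Finset.mem_range]
      constructor
      · have h1 : b * ((T a b)^[k] p).1 ≤ b * a := by
          rw [mul_comm b a]; omega
        have := Nat.le_of_mul_le_mul_left h1 hb
        omega
      · have h1 : a * ((T a b)^[k] p).2 ≤ a * b := by omega
        have := Nat.le_of_mul_le_mul_left h1 ha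
        omega
    have hcard : ((Finset.range (a+1)) ×ˢ (Finset.range (b+1))).card < (Finset.range (N+1)).card := by
      rw [Finset.card_product, Finset.card_range, Finset.card_range, Finset.card_range, hN]
      omega
    obtain ⟨x, hx, y, hy, hxy, hfeq⟩ :=
      Finset.exists_ne_map_eq_of_card_lt_of_maps_to hcard hmaps
    rw [Finset.mem_range] at hx hy
    -- wlog x < y
    rcases hxy.lt_or_gt with hlt | hlt
    case _ =>
      exact sos_cycle ha hb p hv hnb hvalid x y hlt (by omega) hfeq
    case _ =>
      exact sos_cycle ha hb p hv hnb hvalid y x hlt (by omega) hfeq.symm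


end Stmt17

open Stmt17 in
theorem stmt_17 (lam0 lam1 lam2 : ℝ) (a b β1 β2 : ℕ)
    (hlam0 : 0 < lam0) (hlam1 : 0 < lam1) (hlam2 : 0 < lam2)
    (hsum : lam0 + lam1 + lam2 = 1)
    (hβ1 : (β1 : ℝ) = lam1 * (2 * a)) (hβ2 : (β2 : ℝ) = lam2 * (2 * b))
    (hβ1even : Even β1) (hβ2even : Even β2)
    (hβ1pos : 0 < β1) (hβ2pos : 0 < β2) :
    ∃ (s : ℕ) (g : Fin s → MvPolynomial (Fin 2) ℝ),
      (C lam0 + C lam1 * X 0 ^ (2 * a) + C lam2 * X 1 ^ (2 * b)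
          - X 0 ^ β1 * X 1 ^ β2 : MvPolynomial (Fin 2) ℝ)
        = ∑ i, g i ^ 2 := by
  obtain ⟨m, hm⟩ := hβ1even
  obtain ⟨n, hn⟩ := hβ2even
  have hm2 : β1 = 2*m := by omega
  have hn2 : β2 = 2*n := by omega
  have ha : 0 < a := by
    rcases Nat.eq_zero_or_pos a with h | h
    · subst h
      simp at hβ1
      omega
    · exact h
  have hb : 0 < b := by
    rcases Nat.eq_zero_or_pos b with h | h
    · subst h
      simp at hβ2
      omega
    · exact h
  have haR : (0:ℝ) < a := by exact_mod_cast ha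
  have hbR : (0:ℝ) < b := by exact_mod_cast hb
  have hlam1' : lam1 = (m:ℝ)/a := by
    rw [hm2] at hβ1
    push_cast at hβ1
    field_simp
    linarith
  have hlam2' : lam2 = (n:ℝ)/b := by
    rw [hn2] at hβ2
    push_cast at hβ2
    field_simp
    linarith
  -- validity
  have hvR : (b:ℝ)*m + (a:ℝ)*n ≤ (a:ℝ)*b := by
    have h1 : (m:ℝ)/a + (n:ℝ)/b ≤ 1 := by
      rw [← hlam1', ← hlam2']; linarith
    have h2 : ((m:ℝ)/a + (n:ℝ)/b) * (a*b) ≤ 1 * (a*b) := by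
      apply mul_le_mul_of_nonneg_right h1 (by positivity)
    calc (b:ℝ)*m + (a:ℝ)*n = ((m:ℝ)/a + (n:ℝ)/b) * (a*b) := by field_simp
      _ ≤ 1 * (a*b) := h2
      _ = (a:ℝ)*b := by ring
  have hv : Valid a b (m, n) := by
    unfold Valid
    have : ((b*m + a*n : ℕ) : ℝ) ≤ ((a*b : ℕ):ℝ) := by push_cast; linarith
    exact_mod_cast this
  have hsos := sos_main ha hb (m, n) hv
  -- relate the target polynomial to G
  have hkey : (C lam0 + C lam1 * X 0 ^ (2 * a) + C lam2 * X 1 ^ (2 * b)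
          - X 0 ^ β1 * X 1 ^ β2 : P2)
      = C (((a:ℝ)*b)⁻¹) * G a b m n := by
    have hab : ((a:ℝ)*b) ≠ 0 := by positivity
    have hc0 : lam0 = ((a:ℝ)*b)⁻¹ * ((a:ℝ)*b - b*m - a*n) := by
      have : lam0 = 1 - lam1 - lam2 := by linarith
      rw [this, hlam1', hlam2']
      field_simp
    have hc1 : lam1 = ((a:ℝ)*b)⁻¹ * ((b:ℝ)*m) := by
      rw [hlam1']; field_simp
    have hc2 : lam2 = ((a:ℝ)*b)⁻¹ * ((a:ℝ)*n) := by
      rw [hlam2']; field_simp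
    rw [hm2, hn2, hc0, hc1, hc2]
    unfold G
    rw [show C (((a:ℝ)*b)⁻¹ * ((a:ℝ)*b - b*m - a*n))
          = C (((a:ℝ)*b)⁻¹) * (C (a:ℝ) * C (b:ℝ) - C (b:ℝ) * C (m:ℝ) - C (a:ℝ) * C (n:ℝ)) by
        rw [map_mul, map_sub, map_sub, map_mul, map_mul, map_mul],
      show C (((a:ℝ)*b)⁻¹ * ((b:ℝ)*m)) = C (((a:ℝ)*b)⁻¹) * (C (b:ℝ) * C (m:ℝ)) by
        rw [map_mul, map_mul],
      show C (((a:ℝ)*b)⁻¹ * ((a:ℝ)*n)) = C (((a:ℝ)*b)⁻¹) * (C (a:ℝ) * C (n:ℝ)) by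
        rw [map_mul, map_mul]]
    have hone : (C (((a:ℝ)*b)⁻¹) * (C (a:ℝ) * C (b:ℝ)) : P2) = 1 := by
      rw [← map_mul, ← map_mul, inv_mul_cancel₀ hab, C_1]
    calc C (((a:ℝ)*b)⁻¹) * (C (a:ℝ) * C (b:ℝ) - C (b:ℝ) * C (m:ℝ) - C (a:ℝ) * C (n:ℝ))
          + C (((a:ℝ)*b)⁻¹) * (C (b:ℝ) * C (m:ℝ)) * X 0 ^ (2*a)
          + C (((a:ℝ)*b)⁻¹) * (C (a:ℝ) * C (n:ℝ)) * X 1 ^ (2*b)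
          - X 0 ^ (2*m) * X 1 ^ (2*n)
        = C (((a:ℝ)*b)⁻¹) * (C (a:ℝ) * C (b:ℝ) - C (b:ℝ) * C (m:ℝ) - C (a:ℝ) * C (n:ℝ))
          + C (((a:ℝ)*b)⁻¹) * (C (b:ℝ) * C (m:ℝ)) * X 0 ^ (2*a)
          + C (((a:ℝ)*b)⁻¹) * (C (a:ℝ) * C (n:ℝ)) * X 1 ^ (2*b)
          - (C (((a:ℝ)*b)⁻¹) * (C (a:ℝ) * C (b:ℝ))) * (X 0 ^ (2*m) * X 1 ^ (2*n)) := by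
          rw [hone]; ring
      _ = C (((a:ℝ)*b)⁻¹) * G a b m n := by unfold G; ring
  rw [hkey]
  exact (hsos.smul _ (by positivity))
end

section
/- Let n ≥ 1 and let f(x) = f₀ + ∑_{j=1}^n f_j·x_j^{2d} + ∑_{α ∈ Ω} f_α·x^α, where f₀, f_j > 0, Ω is a finite set of lattice points in the interior of the simplex conv{0, 2d·e₁, …, 2d·e_n}, and for each α ∈ Ω write α = ∑_{j=0}^n λ_j^{(α)} α(j) with α(0) = 0, α(j) = 2d·e_j, λ_j^{(α)} ≥ 0, ∑_j λ_j^{(α)} = 1. Suppose there exist a_{α,j} ≥ 0 (for α ∈ Ω, 0 ≤ j ≤ n) with a_{α,j} = 0 iff λ_j^{(α)} = 0, such that (1) |f_α| ≤ ∏_{j=0}^n (a_{α,j}/λ_j^{(α)})^{λ_j^{(α)}} for all α ∈ Ω, and (2) f₀ ≥ ∑_{α∈Ω} a_{α,0} and f_j ≥ ∑_{α∈Ω} a_{α,j} for 1 ≤ j ≤ n (with the convention 0/0 = 1, 0⁰ = 1). Then f(x) ≥ 0 for all x ∈ ℝⁿ. -/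
/-!
Group the terms of `f` into circuit polynomials
`a₀ + ∑ⱼ aⱼ xⱼ^{2d} + f_α x^α`, one per `α ∈ Ω`; condition (2) says that what is left over is a
sum of monomial squares with nonnegative coefficients. Each circuit polynomial is nonnegative by
weighted AM–GM with the barycentric weights `λⱼ` of `α`: applied to the numbers `aⱼ xⱼ^{2d} / λⱼ`
(and `a₀ / λ₀`), its geometric mean is `∏ (aⱼ/λⱼ)^{λⱼ} · |x^α|`, which by (1) dominates `|f_α x^α|`.
-/

open Finset

theorem Real.prod_div_rpow_mul_prod_rpow_le_sum_mul {ι : Type*} (s : Finset ι) (w c y : ι → ℝ)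
    (hw : ∀ i ∈ s, 0 < w i) (hw1 : ∑ i ∈ s, w i = 1) (hc : ∀ i ∈ s, 0 ≤ c i)
    (hy : ∀ i ∈ s, 0 ≤ y i) :
    (∏ i ∈ s, (c i / w i) ^ w i) * ∏ i ∈ s, y i ^ w i ≤ ∑ i ∈ s, c i * y i :=
  calc (∏ i ∈ s, (c i / w i) ^ w i) * ∏ i ∈ s, y i ^ w i
      = ∏ i ∈ s, (c i / w i * y i) ^ w i := by
        rw [← prod_mul_distrib]
        exact prod_congr rfl fun i hi =>
          (Real.mul_rpow (div_nonneg (hc i hi) (hw i hi).le) (hy i hi)).symm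
    _ ≤ ∑ i ∈ s, w i * (c i / w i * y i) :=
        Real.geom_mean_le_arith_mean_weighted s w _ (fun i hi => (hw i hi).le) hw1
          fun i hi => mul_nonneg (div_nonneg (hc i hi) (hw i hi).le) (hy i hi)
    _ = ∑ i ∈ s, c i * y i :=
        sum_congr rfl fun i hi => by field_simp [(hw i hi).ne']

theorem Even.pow_rpow_natCast_div {e : ℕ} (he : Even e) (he0 : e ≠ 0) (x : ℝ) (k : ℕ) :
    (x ^ e) ^ ((k : ℝ) / e) = |x| ^ k := by
  rw [← he.pow_abs, ← Real.rpow_natCast |x| e, ← Real.rpow_mul (abs_nonneg x),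
    mul_div_cancel₀ _ (Nat.cast_ne_zero.mpr he0), Real.rpow_natCast]

theorem circuit_polynomial_nonneg {ι : Type*} [Fintype ι] {e : ℕ} (he : Even e) (α : ι → ℕ)
    (hα : ∀ i, 0 < α i) (hαe : ∑ i, α i < e) (c0 : ℝ) (c : ι → ℝ) (hc0 : 0 ≤ c0)
    (hc : ∀ i, 0 ≤ c i) (b : ℝ)
    (hb : |b| ≤ (c0 / (1 - (∑ i, (α i : ℝ)) / e)) ^ (1 - (∑ i, (α i : ℝ)) / e) *
      ∏ i, (c i / ((α i : ℝ) / e)) ^ ((α i : ℝ) / e)) (x : ι → ℝ) :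
    0 ≤ c0 + ∑ i, c i * x i ^ e + b * ∏ i, x i ^ α i := by
  have he0 : (0 : ℝ) < e := by exact_mod_cast (Nat.zero_le _).trans_lt hαe
  have hw0 : 0 < 1 - (∑ i, (α i : ℝ)) / e := by
    rw [sub_pos, div_lt_one he0]
    exact_mod_cast hαe
  -- `none` indexes the vertex `0` of the simplex, i.e. the constant term.
  have amgm := Real.prod_div_rpow_mul_prod_rpow_le_sum_mul (univ : Finset (Option ι))
    (fun o => o.elim (1 - (∑ i, (α i : ℝ)) / e) fun i => (α i : ℝ) / e)
    (fun o => o.elim c0 c) (fun o => o.elim 1 fun i => x i ^ e)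
    (by
      rintro (_ | i) -
      exacts [hw0, div_pos (by exact_mod_cast hα i) he0])
    (by simp [Fintype.sum_option, ← sum_div])
    (by rintro (_ | i) - <;> simp [hc0, hc])
    (by rintro (_ | i) - <;> simp [he.pow_nonneg])
  simp only [Fintype.prod_option, Fintype.sum_option, Option.elim, Real.one_rpow, one_mul,
    mul_one, he.pow_rpow_natCast_div (by exact_mod_cast he0.ne')] at amgm
  have hmonomial : |b * ∏ i, x i ^ α i| ≤ c0 + ∑ i, c i * x i ^ e := by
    rw [abs_mul, abs_prod]
    simp only [abs_pow]
    exact (mul_le_mul_of_nonneg_right hb (by positivity)).trans amgm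
  linarith [neg_abs_le (b * ∏ i, x i ^ α i)]

theorem stmt_19_general (n : ℕ) (d : ℕ) (m : ℕ)
    (f0 : ℝ) (fj : Fin n → ℝ) (fα : Fin m → ℝ)
    (α : Fin m → Fin n → ℕ)
    -- Ω lies in the interior of the simplex conv{0, 2d·e₁, …, 2d·eₙ}
    (hint : ∀ k, (∀ i, 0 < α k i) ∧ ∑ i, α k i < 2 * d)
    (a0 : Fin m → ℝ) (a : Fin m → Fin n → ℝ)
    (ha0 : ∀ k, 0 ≤ a0 k) (ha : ∀ k j, 0 ≤ a k j)
    (h1 : ∀ k, |fα k| ≤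
        (a0 k / (1 - (∑ i, (α k i : ℝ)) / (2 * d))) ^ (1 - (∑ i, (α k i : ℝ)) / (2 * d)) *
          ∏ j, (a k j / ((α k j : ℝ) / (2 * d))) ^ ((α k j : ℝ) / (2 * d)))
    (h20 : ∑ k, a0 k ≤ f0)
    (h2 : ∀ j, ∑ k, a k j ≤ fj j) :
    ∀ x : Fin n → ℝ,
      0 ≤ f0 + ∑ j, fj j * x j ^ (2 * d) + ∑ k, fα k * ∏ i, x i ^ α k i := by
  intro x
  have hcircuits : 0 ≤ ∑ k, (a0 k + ∑ j, a k j * x j ^ (2 * d) + fα k * ∏ i, x i ^ α k i) :=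
    sum_nonneg fun k _ => circuit_polynomial_nonneg (even_two_mul d) (α k) (hint k).1 (hint k).2 _ _
      (ha0 k) (ha k) _ (by push_cast; exact h1 k) x
  have hsquares : ∑ k, ∑ j, a k j * x j ^ (2 * d) ≤ ∑ j, fj j * x j ^ (2 * d) := by
    rw [sum_comm]
    refine sum_le_sum fun j _ => ?_
    rw [← sum_mul]
    exact mul_le_mul_of_nonneg_right (h2 j) ((even_two_mul d).pow_nonneg _)
  rw [sum_add_distrib, sum_add_distrib] at hcircuits
  linarith

theorem stmt_19 (n : ℕ) (hn : 1 ≤ n) (d : ℕ) (m : ℕ)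
    (f0 : ℝ) (fj : Fin n → ℝ) (fα : Fin m → ℝ)
    (α : Fin m → Fin n → ℕ)
    (hf0 : 0 < f0) (hfj : ∀ j, 0 < fj j)
    (hαne : ∀ k, fα k ≠ 0)
    -- Ω lies in the interior of the simplex conv{0, 2d·e₁, …, 2d·eₙ}
    (hint : ∀ k, (∀ i, 0 < α k i) ∧ ∑ i, α k i < 2 * d)
    (a0 : Fin m → ℝ) (a : Fin m → Fin n → ℝ)
    (ha0 : ∀ k, 0 ≤ a0 k) (ha : ∀ k j, 0 ≤ a k j)
    (ha0zero : ∀ k, a0 k = 0 ↔ 1 - (∑ i, (α k i : ℝ)) / (2 * d) = 0)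
    (hazero : ∀ k j, a k j = 0 ↔ (α k j : ℝ) / (2 * d) = 0)
    (h1 : ∀ k, |fα k| ≤
        (a0 k / (1 - (∑ i, (α k i : ℝ)) / (2 * d))) ^ (1 - (∑ i, (α k i : ℝ)) / (2 * d)) *
          ∏ j, (a k j / ((α k j : ℝ) / (2 * d))) ^ ((α k j : ℝ) / (2 * d)))
    (h20 : ∑ k, a0 k ≤ f0)
    (h2 : ∀ j, ∑ k, a k j ≤ fj j) :
    ∀ x : Fin n → ℝ,
      0 ≤ f0 + ∑ j, fj j * x j ^ (2 * d) + ∑ k, fα k * ∏ i, x i ^ α k i :=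
  stmt_19_general n d m f0 fj fα α hint a0 a ha0 ha h1 h20 h2
end
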